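/- Let A be a nonempty finite alphabet, S a primitive substitution on A with |S(a)| ≥ 2 for some letter a, and ω₀ : ℤ → A a configuration. Then exactly one of the following holds: either d_H(Ωₙ(ω₀), Ω(S)) → 0 as n → ∞, or there exists ε > 0 such that d_H(Ωₙ(ω₀), Ω(S)) ≥ ε for all n ∈ ℕ. In other words, the iterated hull sequence is a bad approximating sequence if and only if d_H(Ωₙ(ω₀), Ω(S)) is bounded away from 0. -/

import Mathlib

/-!
If some `Sᴺ(ω₀)` contains no illegal two-letter word, then every word of length `2r + 1` in
`Sⁿ(ω₀)`, `n` large, lies inside `S^(n-N)(w)` for a two-letter word `w` of `Sᴺ(ω₀)`, because the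
blocks `S^m(a)` grow; so it is legal. Conversely, by primitivity every legal word of that length
occurs in `Sⁿ(ω₀)` for large `n`. Since legal words extend to points of `Ω(S)` (by compactness),
matching central windows gives `d_H(Ωₙ(ω₀), Ω(S)) ≤ 1/(r+1)` for large `n`. Otherwise every
`Sⁿ(ω₀)` contains an illegal two-letter word, and the shift of `Sⁿ(ω₀)` placing it at the origin
is at distance at least `1/2` from `Ω(S)`.
-/

namespace QC

variable {A : Type*}

/-- The shift action of `ℤ` on configurations: `(m · ω)(n) = ω (n - m)`. -/
def shift (m : ℤ) (ω : ℤ → A) : ℤ → A := fun n => ω (n - m)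

/-- The word `u` occurs in the configuration `ω` (at some position `k`). -/
def Occurs (u : List A) (ω : ℤ → A) : Prop :=
  ∃ k : ℤ, u = (List.range u.length).map fun i => ω (k + i)

/-- The dictionary of a configuration: all (nonempty) words occurring in it. -/
def Dict (ω : ℤ → A) : Set (List A) := {u | u ≠ [] ∧ Occurs u ω}

/-- The set of length-`ℓ` words occurring in a configuration. -/
def DictLen (ω : ℤ → A) (ℓ : ℕ) : Set (List A) := {u | u.length = ℓ ∧ Occurs u ω}

/-- The extension of a substitution rule `S : A → List A` to words, by concatenation. -/
def wordSub (S : A → List A) (u : List A) : List A := (u.map S).flatten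

/-- A word is legal for `S` if it is an infix of `Sⁿ(a)` for some letter `a` and `n : ℕ`. -/
def Legal (S : A → List A) (u : List A) : Prop :=
  ∃ (a : A) (n : ℕ), u <:+: (wordSub S)^[n] [a]

/-- `S` is primitive: some power `p ≥ 1` of `S` maps every letter to a word containing
all letters. -/
def Primitive (S : A → List A) : Prop :=
  ∃ p : ℕ, 1 ≤ p ∧ ∀ a b : A, b ∈ (wordSub S)^[p] [a]

/-- The starting position (in `S ω`) of the block coming from the letter `ω k`. -/
def blockStart (S : A → List A) (ω : ℤ → A) (k : ℤ) : ℤ :=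
  if 0 ≤ k then ((List.range k.toNat).map fun i => ((S (ω i)).length : ℤ)).sum
  else -((List.range (-k).toNat).map fun i => ((S (ω (-(i : ℤ) - 1))).length : ℤ)).sum

open Classical in
/-- The extension of a substitution to two-sided configurations: the block structure of
`S ω` is `⋯ S(ω(-1)) . S(ω 0) S(ω 1) ⋯`, with the block of `ω 0` starting at position `0`. -/
noncomputable def confSub [Nonempty A] (S : A → List A) (ω : ℤ → A) : ℤ → A := fun n =>
  if h : ∃ k : ℤ, blockStart S ω k ≤ n ∧ n < blockStart S ω (k + 1) then
    (S (ω (Classical.choose h))).getD (n - blockStart S ω (Classical.choose h)).toNat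
      (Classical.arbitrary A)
  else Classical.arbitrary A

/-- The metric on configurations:
`d(ω₁, ω₂) = inf { 1/(r+1) : ω₁ and ω₂ agree on all |k| < r }`. -/
noncomputable def confDist (ω₁ ω₂ : ℤ → A) : ℝ :=
  sInf {x : ℝ | ∃ r : ℕ, x = 1 / (r + 1) ∧ ∀ k : ℤ, |k| < (r : ℤ) → ω₁ k = ω₂ k}

/-- Distance from a configuration to a set of configurations. -/
noncomputable def distToSet (ω : ℤ → A) (Ω : Set (ℤ → A)) : ℝ :=
  sInf (confDist ω '' Ω)

/-- The Hausdorff distance between two sets of configurations, induced by `confDist`. -/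
noncomputable def hausDist (Ω₁ Ω₂ : Set (ℤ → A)) : ℝ :=
  max (sSup ((fun ω => distToSet ω Ω₂) '' Ω₁)) (sSup ((fun ω => distToSet ω Ω₁) '' Ω₂))

/-- The product topology on `ℤ → A`, where `A` carries the discrete topology. -/
def confTop (A : Type*) : TopologicalSpace (ℤ → A) :=
  @Pi.topologicalSpace ℤ (fun _ => A) fun _ => ⊥

/-- The shift orbit of a configuration. -/
def orbit (ω : ℤ → A) : Set (ℤ → A) := {η | ∃ m : ℤ, η = shift m ω}

/-- The hull of a configuration: the closure of its shift orbit in the product topology. -/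
def hull (ω : ℤ → A) : Set (ℤ → A) := @closure _ (confTop A) (orbit ω)

/-- The `n`-th iterated hull `Ωₙ(ω₀)`: the hull of `Sⁿ(ω₀)`. -/
noncomputable def IHS [Nonempty A] (S : A → List A) (ω₀ : ℤ → A) (n : ℕ) : Set (ℤ → A) :=
  hull ((confSub S)^[n] ω₀)

/-- The substitution subshift `Ω(S) = {ω : W(ω) ⊆ W(S)}`. -/
def OmegaS (S : A → List A) : Set (ℤ → A) := {ω | ∀ u ∈ Dict ω, Legal S u}

/-- Edges of the directed graph `G(S)`: `u → w` iff `u, w` are both illegal and `w` is an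
infix of `S(u)`. -/
def GEdge (S : A → List A) (u w : List A) : Prop :=
  ¬Legal S u ∧ ¬Legal S w ∧ w <:+: wordSub S u

/-- `p` is a directed path of length `ℓ` in `G(S)` (on the vertex set of `2`-words). -/
def GPath (S : A → List A) (p : ℕ → List A) (ℓ : ℕ) : Prop :=
  (∀ i ≤ ℓ, (p i).length = 2) ∧ ∀ j < ℓ, GEdge S (p j) (p (j + 1))

/-- An initial configuration is good for `S` if every directed path in `G(S)` starting at a
`2`-word occurring in `ω₀` has length `< |A|²`. -/
def GoodInit [Fintype A] (S : A → List A) (ω₀ : ℤ → A) : Prop :=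
  ∀ (p : ℕ → List A) (ℓ : ℕ), GPath S p ℓ → Occurs (p 0) ω₀ → ℓ < (Fintype.card A) ^ 2

/-- The substitution matrix of `S`: `M(S)_{a,b}` is the number of occurrences of `a`
in `S(b)`. -/
def subMatrix [Fintype A] [DecidableEq A] (S : A → List A) : Matrix A A ℝ :=
  fun a b => ((S b).count a : ℝ)

/-- The Perron–Frobenius eigenvalue of `S`: the spectral radius of its substitution
matrix (viewed as a complex matrix). -/
noncomputable def pfEigenvalue [Fintype A] [DecidableEq A] (S : A → List A) : ℝ :=
  (spectralRadius ℂ ((subMatrix S).map (algebraMap ℝ ℂ))).toReal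

/-- The periodic configuration `u^∞`, satisfying `u^∞(n) = u(n mod |u|)`. -/
noncomputable def perConf [Nonempty A] (u : List A) : ℤ → A := fun n =>
  u.getD (n % (u.length : ℤ)).toNat (Classical.arbitrary A)

/-- `ℓ²(ℤ, ℂ)`. -/
abbrev l2Z : Type := lp (fun _ : ℤ => ℂ) 2

/-- `H` is the Schrödinger operator on `ℓ²(ℤ,ℂ)` with potential `v ∘ ω`:
`(H ψ)(n) = -(ψ(n+1) + ψ(n-1) - 2ψ(n)) + v(ω(n)) ψ(n)`. -/
def IsSchrodinger (v : A → ℝ) (ω : ℤ → A) (H : l2Z →L[ℂ] l2Z) : Prop :=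
  ∀ (ψ : l2Z) (n : ℤ),
    (H ψ : ℤ → ℂ) n = -((ψ : ℤ → ℂ) (n + 1) + (ψ : ℤ → ℂ) (n - 1) - 2 * (ψ : ℤ → ℂ) n)
      + (v (ω n) : ℂ) * (ψ : ℤ → ℂ) n

/-- The spectrum of `H`, viewed as a subset of `ℝ`. -/
def realSpectrum (H : l2Z →L[ℂ] l2Z) : Set ℝ := {x : ℝ | (x : ℂ) ∈ spectrum ℂ H}

def wordAt (ω : ℤ → A) (k : ℤ) (L : ℕ) : List A :=
  (List.range L).map fun i : ℕ => ω (k + i)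

-- The coercion `List ℕ → List ℤ` in `Occurs` and `blockStart` unfolds to a `flatMap`.
theorem map_natCast_range {β : Type*} (f : ℤ → β) (n : ℕ) :
    (List.range n : List ℤ).map f = (List.range n).map fun i : ℕ => f i := by
  simp [List.map_flatMap, List.map_eq_flatMap (l := List.range _)]

theorem occurs_iff {u : List A} {ω : ℤ → A} :
    Occurs u ω ↔ ∃ k : ℤ, u = wordAt ω k u.length := by
  simp only [Occurs, wordAt, map_natCast_range]

@[simp] theorem length_wordAt (ω : ℤ → A) (k : ℤ) (L : ℕ) : (wordAt ω k L).length = L := by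
  simp [wordAt]

@[simp] theorem getElem_wordAt (ω : ℤ → A) (k : ℤ) (L i : ℕ) (hi : i < (wordAt ω k L).length) :
    (wordAt ω k L)[i] = ω (k + i) := by
  simp [wordAt]

@[simp] theorem wordAt_zero (ω : ℤ → A) (k : ℤ) : wordAt ω k 0 = [] := rfl

theorem wordAt_add (ω : ℤ → A) (k : ℤ) (L₁ L₂ : ℕ) :
    wordAt ω k (L₁ + L₂) = wordAt ω k L₁ ++ wordAt ω (k + L₁) L₂ := by
  apply List.ext_getElem (by simp)
  intro i h _
  simp only [length_wordAt] at h
  rcases lt_or_ge i L₁ with hi | hi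
  · simp [List.getElem_append_left, hi]
  · simp [List.getElem_append_right, hi, add_assoc]

@[simp] theorem wordAt_one (ω : ℤ → A) (k : ℤ) : wordAt ω k 1 = [ω k] := by
  simp [wordAt]

theorem wordAt_two (ω : ℤ → A) (k : ℤ) : wordAt ω k 2 = [ω k, ω (k + 1)] := by
  simp [wordAt, List.range_succ]

theorem wordAt_eq_wordAt_iff {ω₁ ω₂ : ℤ → A} {k₁ k₂ : ℤ} {L : ℕ} :
    wordAt ω₁ k₁ L = wordAt ω₂ k₂ L ↔ ∀ i < L, ω₁ (k₁ + i) = ω₂ (k₂ + i) := by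
  simp [wordAt, List.map_inj_left]

theorem wordAt_shift (ω : ℤ → A) (m k : ℤ) (L : ℕ) :
    wordAt (shift m ω) k L = wordAt ω (k - m) L := by
  simp only [wordAt, shift, sub_add_eq_add_sub]

theorem wordAt_infix_wordAt (ω : ℤ → A) {k₁ k₂ : ℤ} {L₁ L₂ : ℕ}
    (h₁ : k₂ ≤ k₁) (h₂ : k₁ + L₁ ≤ k₂ + L₂) : wordAt ω k₁ L₁ <:+: wordAt ω k₂ L₂ := by
  obtain ⟨t, rfl⟩ : ∃ t : ℕ, k₁ = k₂ + t := ⟨(k₁ - k₂).toNat, by omega⟩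
  obtain ⟨s, rfl⟩ : ∃ s : ℕ, L₂ = t + L₁ + s := ⟨L₂ - (t + L₁), by omega⟩
  rw [wordAt_add, wordAt_add]
  exact ⟨_, _, rfl⟩

theorem occurs_wordAt (ω : ℤ → A) (k : ℤ) (L : ℕ) : Occurs (wordAt ω k L) ω :=
  occurs_iff.mpr ⟨k, by rw [length_wordAt]⟩

theorem Occurs.of_infix {u v : List A} {ω : ℤ → A} (hu : Occurs u ω) (hv : v <:+: u) :
    Occurs v ω := by
  obtain ⟨k, hk⟩ := occurs_iff.mp hu
  obtain ⟨x, y, rfl⟩ := hv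
  have hL : wordAt ω k (x.length + v.length + y.length) = x ++ v ++ y := by
    rw [hk]; simp [add_assoc]
  rw [wordAt_add, wordAt_add] at hL
  have := List.append_inj (List.append_inj hL.symm (by simp)).1 (by simp)
  exact this.2 ▸ occurs_wordAt ω _ _

section Substitution

variable {S : A → List A}

@[simp] theorem wordSub_append (S : A → List A) (u v : List A) :
    wordSub S (u ++ v) = wordSub S u ++ wordSub S v := by
  simp [wordSub]

@[simp] theorem wordSub_singleton (S : A → List A) (a : A) : wordSub S [a] = S a := by
  simp [wordSub]

theorem iterate_wordSub_append (S : A → List A) (m : ℕ) (u v : List A) :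
    (wordSub S)^[m] (u ++ v) = (wordSub S)^[m] u ++ (wordSub S)^[m] v := by
  induction m generalizing u v with
  | zero => rfl
  | succ m ih => simp only [Function.iterate_succ_apply, wordSub_append, ih]

theorem _root_.List.IsInfix.iterate_wordSub {u v : List A} (h : u <:+: v) (S : A → List A)
    (m : ℕ) :
    (wordSub S)^[m] u <:+: (wordSub S)^[m] v := by
  obtain ⟨x, y, rfl⟩ := h
  simp only [iterate_wordSub_append]
  exact ⟨_, _, rfl⟩

theorem length_le_length_wordSub (hS : ∀ a, S a ≠ []) (u : List A) :
    u.length ≤ (wordSub S u).length := by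
  induction u with
  | nil => simp
  | cons a t ih =>
    rw [← List.singleton_append, wordSub_append, wordSub_singleton, List.length_append,
      List.length_append, List.length_singleton]
    have := List.length_pos_iff.mpr (hS a)
    omega

theorem length_le_length_iterate_wordSub (hS : ∀ a, S a ≠ []) (m : ℕ) (u : List A) :
    u.length ≤ ((wordSub S)^[m] u).length := by
  induction m generalizing u with
  | zero => rfl
  | succ m ih => exact (length_le_length_wordSub hS u).trans (ih _)

theorem iterate_wordSub_ne_nil (hS : ∀ a, S a ≠ []) (m : ℕ) {u : List A} (hu : u ≠ []) :
    (wordSub S)^[m] u ≠ [] :=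
  List.ne_nil_of_length_pos <|
    (List.length_pos_iff.mpr hu).trans_le (length_le_length_iterate_wordSub hS m u)

theorem Legal.of_infix {u v : List A} (hv : Legal S v) (h : u <:+: v) : Legal S u := by
  obtain ⟨a, n, hn⟩ := hv
  exact ⟨a, n, h.trans hn⟩

theorem legal_singleton (S : A → List A) (a : A) : Legal S [a] :=
  ⟨a, 0, List.infix_refl _⟩

theorem Legal.iterate_wordSub {u : List A} (h : Legal S u) (m : ℕ) :
    Legal S ((wordSub S)^[m] u) := by
  obtain ⟨a, n, hn⟩ := h
  exact ⟨a, m + n, by rw [Function.iterate_add_apply]; exact hn.iterate_wordSub S m⟩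

theorem mem_iterate_wordSub_of_le (hS : ∀ a, S a ≠ []) {p : ℕ}
    (hp : ∀ a b : A, b ∈ (wordSub S)^[p] [a]) {t : ℕ} (ht : p ≤ t) (a b : A) :
    b ∈ (wordSub S)^[t] [a] := by
  obtain ⟨s, rfl⟩ := Nat.exists_eq_add_of_le ht
  obtain ⟨c, tail, hct⟩ := List.exists_cons_of_ne_nil
    (iterate_wordSub_ne_nil hS s (u := [a]) (List.cons_ne_nil _ _))
  rw [Function.iterate_add_apply, hct, ← List.singleton_append, iterate_wordSub_append]
  exact List.mem_append_left _ (hp c b)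

/-- The expanding letter `a₀` occurs in every `S^p[b]` and `S[a₀]` has two letters, so the
minimal length of the words `S^m[b]` at least doubles every `p + 1` steps. -/
theorem eventually_le_length_iterate_wordSub (hS : ∀ a, S a ≠ []) (hprim : Primitive S)
    (hexp : ∃ a, 2 ≤ (S a).length) (L : ℕ) :
    ∀ᶠ m in Filter.atTop, ∀ a, L ≤ ((wordSub S)^[m] [a]).length := by
  obtain ⟨p, -, hp⟩ := hprim
  obtain ⟨a₀, ha₀⟩ := hexp
  induction L with
  | zero => simp
  | succ L ih =>
    obtain ⟨m₀, hm₀⟩ := Filter.eventually_atTop.mp ih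
    refine Filter.eventually_atTop.mpr ⟨m₀ + 1 + p, fun n hn b => ?_⟩
    obtain ⟨m, rfl⟩ : ∃ m, n = m + 1 + p := ⟨n - 1 - p, by omega⟩
    obtain ⟨c₁, c₂, t, hS₀⟩ : ∃ c₁ c₂ t, S a₀ = c₁ :: c₂ :: t := by
      match S a₀, ha₀ with
      | c₁ :: c₂ :: t, _ => exact ⟨c₁, c₂, t, rfl⟩
    obtain ⟨x, y, hxy⟩ := List.append_of_mem (hp b a₀)
    have hdouble : ((wordSub S)^[m + 1] [a₀]).length =
        ((wordSub S)^[m] [c₁]).length + ((wordSub S)^[m] [c₂]).length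
          + ((wordSub S)^[m] t).length := by
      rw [Function.iterate_succ_apply, wordSub_singleton, hS₀,
        show c₁ :: c₂ :: t = [c₁] ++ [c₂] ++ t from rfl, iterate_wordSub_append,
        iterate_wordSub_append, List.length_append, List.length_append]
    have hsplit : ((wordSub S)^[m + 1 + p] [b]).length =
        ((wordSub S)^[m + 1] x).length + ((wordSub S)^[m + 1] [a₀]).length
          + ((wordSub S)^[m + 1] y).length := by
      rw [Function.iterate_add_apply, hxy, ← List.singleton_append, ← List.append_assoc,
        iterate_wordSub_append, iterate_wordSub_append, List.length_append, List.length_append]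
    have h₁ := hm₀ m (by omega) c₁
    have h₂ := hm₀ m (by omega) c₂
    have h₁' := List.length_pos_iff.mpr (iterate_wordSub_ne_nil hS m (u := [c₁]) (by simp))
    omega

end Substitution

theorem exists_le_lt_of_add_one_le {f : ℤ → ℤ} (hf : ∀ k, f k + 1 ≤ f (k + 1)) (n : ℤ) :
    ∃ k, f k ≤ n ∧ n < f (k + 1) := by
  have hmono : Monotone fun k => f k - k :=
    monotone_int_of_le_succ fun k => by linarith [hf k]
  have hbdd : ∀ k, f k ≤ n → k ≤ max 0 (n - f 0) := fun k hk => by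
    by_contra! h
    have := hmono (show 0 ≤ k by omega)
    simp only [sub_zero] at this
    omega
  have hinh : f (min 0 (n - f 0)) ≤ n := by
    have := hmono (min_le_left 0 (n - f 0))
    simp only [sub_zero] at this
    omega
  obtain ⟨k, hk, hmax⟩ := Int.exists_greatest_of_bdd ⟨_, hbdd⟩ ⟨_, hinh⟩
  exact ⟨k, hk, lt_of_not_ge fun h => by linarith [hmax _ h]⟩

/-- `η` is the image of `ω` under the word map `T`, the block `T [ω j]` of `η` starting at
position `b j`. -/
structure IsBlockImage (T : List A → List A) (ω η : ℤ → A) (b : ℤ → ℤ) : Prop where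
  start_add : ∀ (j : ℤ) (s : ℕ), b (j + s) = b j + (T (wordAt ω j s)).length
  wordAt_start : ∀ (j : ℤ) (s : ℕ), wordAt η (b j) (T (wordAt ω j s)).length = T (wordAt ω j s)

namespace IsBlockImage

variable {T T' : List A → List A} {ω η ζ : ℤ → A} {b b' : ℤ → ℤ}

theorem refl (ω : ℤ → A) : IsBlockImage id ω ω id :=
  ⟨fun _ _ => by simp, fun _ _ => by simp⟩

theorem comp (h' : IsBlockImage T' η ζ b') (h : IsBlockImage T ω η b) :
    IsBlockImage (T' ∘ T) ω ζ (b' ∘ b) where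
  start_add j s := by
    have := h'.start_add (b j) (T (wordAt ω j s)).length
    rw [h.wordAt_start] at this
    simp only [Function.comp_apply, h.start_add, this]
  wordAt_start j s := by
    have := h'.wordAt_start (b j) (T (wordAt ω j s)).length
    rwa [h.wordAt_start] at this

theorem add_one (h : IsBlockImage T ω η b) (j : ℤ) : b (j + 1) = b j + (T [ω j]).length := by
  simpa using h.start_add j 1

theorem occurs {u : List A} (h : IsBlockImage T ω η b) (hu : Occurs u ω) : Occurs (T u) η := by
  obtain ⟨k, hk⟩ := occurs_iff.mp hu
  rw [hk]
  exact occurs_iff.mpr ⟨b k, (h.wordAt_start k u.length).symm⟩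

/-- A word of `η` no longer than a block plus one letter lies within two consecutive
blocks. -/
theorem exists_infix_of_length_le {v : List A} (h : IsBlockImage T ω η b)
    (hpos : ∀ a, T [a] ≠ []) (hlen : ∀ a, v.length ≤ (T [a]).length + 1) (hv : Occurs v η) :
    ∃ w : List A, w.length = 2 ∧ Occurs w ω ∧ v <:+: T w := by
  obtain ⟨k, hk⟩ := occurs_iff.mp hv
  obtain ⟨j, hj₁, hj₂⟩ := exists_le_lt_of_add_one_le (f := b) (fun j => by
    have := List.length_pos_iff.mpr (hpos (ω j))
    rw [h.add_one]; omega) k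
  refine ⟨wordAt ω j 2, length_wordAt _ _ _, occurs_wordAt _ _ _, ?_⟩
  rw [hk, ← h.wordAt_start j 2]
  have hend : b (j + 1 + 1) = b j + (T (wordAt ω j 2)).length := by
    rw [add_assoc, ← h.start_add j 2]; rfl
  have := hlen (ω (j + 1))
  have := h.add_one (j + 1)
  exact wordAt_infix_wordAt η hj₁ (by omega)

end IsBlockImage

theorem blockStart_add_one (S : A → List A) (ω : ℤ → A) (k : ℤ) :
    blockStart S ω (k + 1) = blockStart S ω k + (S (ω k)).length := by
  simp only [blockStart, map_natCast_range]
  rcases lt_trichotomy k (-1) with hk | rfl | hk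
  · rw [if_neg (by omega), if_neg (by omega), show (-k).toNat = (-(k + 1)).toNat + 1 by omega,
      List.sum_range_succ, show -(((-(k + 1)).toNat : ℕ) : ℤ) - 1 = k by omega]
    ring
  · simp
  · rw [if_pos (by omega), if_pos (by omega), show (k + 1).toNat = k.toNat + 1 by omega,
      List.sum_range_succ, Int.toNat_of_nonneg (by omega)]

theorem strictMono_blockStart {S : A → List A} (hS : ∀ a, S a ≠ []) (ω : ℤ → A) :
    StrictMono (blockStart S ω) :=
  strictMono_int_of_lt_succ fun k => by
    rw [blockStart_add_one]
    have := List.length_pos_iff.mpr (hS (ω k))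
    omega

theorem blockStart_add_natCast (S : A → List A) (ω : ℤ → A) (j : ℤ) (s : ℕ) :
    blockStart S ω (j + s) = blockStart S ω j + (wordSub S (wordAt ω j s)).length := by
  induction s with
  | zero => simp [wordSub]
  | succ s ih =>
    rw [Nat.cast_succ, ← add_assoc, blockStart_add_one, ih, wordAt_add, wordSub_append,
      wordAt_one, wordSub_singleton, List.length_append, Nat.cast_add, add_assoc]

section ConfSub

variable [Nonempty A] {S : A → List A}

theorem confSub_eq_getD (hS : ∀ a, S a ≠ []) {ω : ℤ → A} {k n : ℤ}
    (h₁ : blockStart S ω k ≤ n) (h₂ : n < blockStart S ω (k + 1)) :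
    confSub S ω n = (S (ω k)).getD (n - blockStart S ω k).toNat (Classical.arbitrary A) := by
  have hex : ∃ k, blockStart S ω k ≤ n ∧ n < blockStart S ω (k + 1) := ⟨k, h₁, h₂⟩
  have hmono := strictMono_blockStart hS ω
  have huniq : Classical.choose hex = k := by
    obtain ⟨h₁', h₂'⟩ := Classical.choose_spec hex
    have := hmono.lt_iff_lt.mp (h₁.trans_lt h₂')
    have := hmono.lt_iff_lt.mp (h₁'.trans_lt h₂)
    omega
  rw [confSub, dif_pos hex, huniq]

theorem wordAt_confSub_blockStart (hS : ∀ a, S a ≠ []) (ω : ℤ → A) (k : ℤ) :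
    wordAt (confSub S ω) (blockStart S ω k) (S (ω k)).length = S (ω k) := by
  refine List.ext_getElem (length_wordAt _ _ _) fun i hi _ => ?_
  rw [length_wordAt] at hi
  have := blockStart_add_one S ω k
  rw [getElem_wordAt, confSub_eq_getD hS (k := k) (by omega) (by omega), add_sub_cancel_left,
    Int.toNat_natCast, List.getD_eq_getElem]

theorem isBlockImage_confSub (hS : ∀ a, S a ≠ []) (ω : ℤ → A) :
    IsBlockImage (wordSub S) ω (confSub S ω) (blockStart S ω) where
  start_add := blockStart_add_natCast S ω
  wordAt_start j s := by
    induction s with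
    | zero => simp [wordSub]
    | succ s ih =>
      rw [wordAt_add, wordSub_append, wordAt_one, wordSub_singleton, List.length_append,
        wordAt_add, ih, ← blockStart_add_natCast, wordAt_confSub_blockStart hS]

theorem exists_isBlockImage_iterate (hS : ∀ a, S a ≠ []) (ω : ℤ → A) (m : ℕ) :
    ∃ b, IsBlockImage ((wordSub S)^[m]) ω ((confSub S)^[m] ω) b := by
  induction m with
  | zero => exact ⟨_, IsBlockImage.refl ω⟩
  | succ m ih =>
    obtain ⟨b, hb⟩ := ih
    rw [Function.iterate_succ', Function.iterate_succ']
    exact ⟨_, (isBlockImage_confSub hS _).comp hb⟩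

theorem Occurs.iterate_confSub (hS : ∀ a, S a ≠ []) {u : List A} {ω : ℤ → A}
    (hu : Occurs u ω) (m : ℕ) : Occurs ((wordSub S)^[m] u) ((confSub S)^[m] ω) :=
  (exists_isBlockImage_iterate hS ω m).choose_spec.occurs hu

theorem legal_of_occurs_iterate_confSub (hS : ∀ a, S a ≠ []) {ω : ℤ → A}
    (hω : ∀ w : List A, w.length = 2 → Occurs w ω → Legal S w) {m : ℕ} {v : List A}
    (hlen : ∀ a, v.length ≤ ((wordSub S)^[m] [a]).length + 1)
    (hv : Occurs v ((confSub S)^[m] ω)) : Legal S v := by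
  obtain ⟨b, hb⟩ := exists_isBlockImage_iterate hS ω m
  obtain ⟨w, hw₂, hwω, hvw⟩ := hb.exists_infix_of_length_le
    (fun a => iterate_wordSub_ne_nil hS m (List.cons_ne_nil a [])) hlen hv
  exact ((hω w hw₂ hwω).iterate_wordSub m).of_infix hvw

end ConfSub

section Metric

theorem confDist_nonneg (ω₁ ω₂ : ℤ → A) : 0 ≤ confDist ω₁ ω₂ :=
  Real.sInf_nonneg fun _ ⟨_, hr, _⟩ => hr ▸ by positivity

theorem confDist_le {ω₁ ω₂ : ℤ → A} {r : ℕ} (h : ∀ k : ℤ, |k| < r → ω₁ k = ω₂ k) :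
    confDist ω₁ ω₂ ≤ 1 / (r + 1) :=
  csInf_le ⟨0, fun _ ⟨_, hr, _⟩ => hr ▸ by positivity⟩ ⟨r, rfl, h⟩

theorem le_confDist {ω₁ ω₂ : ℤ → A} {c : ℝ}
    (h : ∀ r : ℕ, (∀ k : ℤ, |k| < r → ω₁ k = ω₂ k) → c ≤ 1 / (r + 1)) :
    c ≤ confDist ω₁ ω₂ :=
  le_csInf ⟨1, 0, by norm_num, fun k hk => absurd hk (by simp)⟩ fun _ ⟨r, hr, hr'⟩ =>
    hr ▸ h r hr'

theorem confDist_le_of_wordAt_eq {ω₁ ω₂ : ℤ → A} {r : ℕ}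
    (h : wordAt ω₁ (-r) (2 * r + 1) = wordAt ω₂ (-r) (2 * r + 1)) :
    confDist ω₁ ω₂ ≤ 1 / (r + 1) :=
  confDist_le fun k hk => by
    obtain ⟨hk₁, hk₂⟩ := abs_lt.mp hk
    have := wordAt_eq_wordAt_iff.mp h (k + r).toNat (by omega)
    rwa [show -(r : ℤ) + (k + r).toNat = k by omega] at this

theorem half_le_confDist_of_wordAt_ne {ω₁ ω₂ : ℤ → A}
    (h : wordAt ω₁ 0 2 ≠ wordAt ω₂ 0 2) : 1 / 2 ≤ confDist ω₁ ω₂ :=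
  le_confDist fun r hr => by
    by_cases hr2 : 2 ≤ r
    · refine absurd ?_ h
      rw [wordAt_two, wordAt_two, zero_add, hr 0 (by simp; omega), hr 1 (by simp; omega)]
    · interval_cases r <;> norm_num

theorem distToSet_le_of_mem {ω ω' : ℤ → A} {Ω : Set (ℤ → A)} (h : ω' ∈ Ω) :
    distToSet ω Ω ≤ confDist ω ω' :=
  csInf_le ⟨0, Set.forall_mem_image.mpr fun _ _ => confDist_nonneg _ _⟩ ⟨ω', h, rfl⟩

theorem le_distToSet {ω : ℤ → A} {Ω : Set (ℤ → A)} {c : ℝ} (hΩ : Ω.Nonempty)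
    (h : ∀ ω' ∈ Ω, c ≤ confDist ω ω') : c ≤ distToSet ω Ω :=
  le_csInf (hΩ.image _) (Set.forall_mem_image.mpr h)

theorem distToSet_nonneg (ω : ℤ → A) (Ω : Set (ℤ → A)) : 0 ≤ distToSet ω Ω :=
  Real.sInf_nonneg (Set.forall_mem_image.mpr fun _ _ => confDist_nonneg _ _)

theorem distToSet_le_one (ω : ℤ → A) (Ω : Set (ℤ → A)) : distToSet ω Ω ≤ 1 := by
  rcases Ω.eq_empty_or_nonempty with rfl | ⟨ω', hω'⟩
  · simp [distToSet]
  · refine (distToSet_le_of_mem hω').trans ?_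
    simpa using confDist_le (ω₁ := ω) (ω₂ := ω') (r := 0) (by simp)

theorem hausDist_le {Ω₁ Ω₂ : Set (ℤ → A)} {c : ℝ} (hc : 0 ≤ c)
    (h₁ : ∀ ω ∈ Ω₁, distToSet ω Ω₂ ≤ c) (h₂ : ∀ ω ∈ Ω₂, distToSet ω Ω₁ ≤ c) :
    hausDist Ω₁ Ω₂ ≤ c :=
  max_le (Real.sSup_le (Set.forall_mem_image.mpr h₁) hc)
    (Real.sSup_le (Set.forall_mem_image.mpr h₂) hc)

theorem distToSet_le_hausDist {Ω₁ Ω₂ : Set (ℤ → A)} {ω : ℤ → A} (hω : ω ∈ Ω₁) :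
    distToSet ω Ω₂ ≤ hausDist Ω₁ Ω₂ :=
  le_max_of_le_left <|
    le_csSup ⟨1, Set.forall_mem_image.mpr fun _ _ => distToSet_le_one _ _⟩ ⟨ω, hω, rfl⟩

theorem hausDist_nonneg {Ω₁ Ω₂ : Set (ℤ → A)} (h : Ω₁.Nonempty) : 0 ≤ hausDist Ω₁ Ω₂ :=
  (distToSet_nonneg _ _).trans (distToSet_le_hausDist h.some_mem)

end Metric

section Topology

theorem isClopen_setOf_wordAt_mem [TopologicalSpace A] [DiscreteTopology A] (k : ℤ) (L : ℕ)
    (W : Set (List A)) : IsClopen {ω : ℤ → A | wordAt ω k L ∈ W} := by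
  have hwindow : Continuous fun (ω : ℤ → A) (i : Fin L) => ω (k + i) :=
    continuous_pi fun i => continuous_apply _
  have hofFn : ∀ ω : ℤ → A, wordAt ω k L = List.ofFn fun i : Fin L => ω (k + i) :=
    fun ω => List.ext_getElem (by simp) fun i _ _ => by simp
  simp only [hofFn]
  exact (isClopen_discrete {f : Fin L → A | List.ofFn f ∈ W}).preimage hwindow

theorem occurs_of_mem_hull {η ω : ℤ → A} (h : η ∈ hull ω) (k : ℤ) (L : ℕ) :
    Occurs (wordAt η k L) ω := by
  let _ : TopologicalSpace A := ⊥
  have _ : DiscreteTopology A := ⟨rfl⟩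
  obtain ⟨_, hζ, m, rfl⟩ := mem_closure_iff.mp h _
    (isClopen_setOf_wordAt_mem k L {wordAt η k L}).isOpen rfl
  rw [← Set.mem_singleton_iff.mp hζ, wordAt_shift]
  exact occurs_wordAt ω _ _

theorem shift_mem_hull (ω : ℤ → A) (m : ℤ) : shift m ω ∈ hull ω :=
  @subset_closure _ (confTop A) _ _ (show shift m ω ∈ orbit ω from ⟨m, rfl⟩)

end Topology

section Extension

variable {S : A → List A}

/-- For `q ≥ p` with all `|S^q[b]| ≥ n + 3`, the letter `a` occurs in `S^q` of the second
letter of `S^q[a]`, hence well inside `S^(2q)[a]`. -/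
theorem exists_iterate_wordSub_eq_append_cons_append (hS : ∀ a, S a ≠ [])
    (hprim : Primitive S) (hexp : ∃ a, 2 ≤ (S a).length) (a : A) (n : ℕ) :
    ∃ k x y, n ≤ x.length ∧ n ≤ y.length ∧ (wordSub S)^[k] [a] = x ++ a :: y := by
  have hlong := eventually_le_length_iterate_wordSub hS hprim hexp (n + 3)
  obtain ⟨p, -, hp⟩ := hprim
  obtain ⟨q, hq, hqp⟩ := (hlong.and (Filter.eventually_ge_atTop p)).exists
  obtain ⟨d₁, d₂, d₃, t, hd⟩ : ∃ d₁ d₂ d₃ t, (wordSub S)^[q] [a] = d₁ :: d₂ :: d₃ :: t := by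
    have := hq a
    match (wordSub S)^[q] [a], this with
    | d₁ :: d₂ :: d₃ :: t, _ => exact ⟨d₁, d₂, d₃, t, rfl⟩
  obtain ⟨x₂, y₂, hxy₂⟩ := List.append_of_mem (mem_iterate_wordSub_of_le hS hp hqp d₂ a)
  refine ⟨q + q, (wordSub S)^[q] [d₁] ++ x₂, y₂ ++ (wordSub S)^[q] (d₃ :: t), ?_, ?_, ?_⟩
  · have := hq d₁
    simp only [List.length_append]
    omega
  · have := hq d₃
    rw [List.length_append, ← List.singleton_append, iterate_wordSub_append, List.length_append]
    omega
  · rw [Function.iterate_add_apply, hd, show d₁ :: d₂ :: d₃ :: t = [d₁] ++ [d₂] ++ d₃ :: t from rfl,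
      iterate_wordSub_append, iterate_wordSub_append, hxy₂]
    simp

theorem Legal.exists_legal_append_append (hS : ∀ a, S a ≠ []) (hprim : Primitive S)
    (hexp : ∃ a, 2 ≤ (S a).length) {v : List A} (hv : Legal S v) (n : ℕ) :
    ∃ X Y, n ≤ X.length ∧ n ≤ Y.length ∧ Legal S (X ++ v ++ Y) := by
  obtain ⟨a, m, P, Q, hPQ⟩ := hv
  obtain ⟨k, x, y, hx, hy, hxy⟩ :=
    exists_iterate_wordSub_eq_append_cons_append hS hprim hexp a n
  refine ⟨(wordSub S)^[m] x ++ P, Q ++ (wordSub S)^[m] y, ?_, ?_, ?_⟩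
  · have := length_le_length_iterate_wordSub hS m x
    simp only [List.length_append]
    omega
  · have := length_le_length_iterate_wordSub hS m y
    simp only [List.length_append]
    omega
  · have hlegal : Legal S ((wordSub S)^[m] ((wordSub S)^[k] [a])) :=
      Legal.iterate_wordSub ⟨a, k, List.infix_refl _⟩ m
    rw [hxy, ← List.singleton_append, iterate_wordSub_append, iterate_wordSub_append, ← hPQ]
      at hlegal
    simpa only [List.append_assoc] using hlegal

theorem exists_wordAt_eq [Nonempty A] (u : List A) (k : ℤ) :
    ∃ ω : ℤ → A, wordAt ω k u.length = u :=
  ⟨fun j => u.getD (j - k).toNat (Classical.arbitrary A),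
    List.ext_getElem (by simp) fun i _ hi => by simp [List.getElem?_eq_getElem hi]⟩

/-- By compactness: a limit of configurations whose windows of growing size around `v` are
legal. -/
theorem Legal.exists_mem_omegaS [Finite A] (hS : ∀ a, S a ≠ []) (hprim : Primitive S)
    (hexp : ∃ a, 2 ≤ (S a).length) {v : List A} (hv : Legal S v) (c : ℤ) :
    ∃ ω ∈ OmegaS S, wordAt ω c v.length = v := by
  let _ : TopologicalSpace A := ⊥
  have _ : DiscreteTopology A := ⟨rfl⟩
  have _ : Nonempty A := let ⟨a, _⟩ := hv; ⟨a⟩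
  let G : ℕ → Set (ℤ → A) := fun n =>
    {ω | wordAt ω c v.length ∈ ({v} : Set (List A))} ∩
      {ω | wordAt ω (c - n) (v.length + 2 * n) ∈ {w | Legal S w}}
  have hanti : ∀ n, G (n + 1) ⊆ G n := fun n ω ⟨hω, hleg⟩ =>
    ⟨hω, Legal.of_infix hleg (wordAt_infix_wordAt ω (by omega) (by push_cast; omega))⟩
  have hne : ∀ n, (G n).Nonempty := fun n => by
    obtain ⟨X, Y, hX, hY, hleg⟩ := hv.exists_legal_append_append hS hprim hexp n
    obtain ⟨ω, hω⟩ := exists_wordAt_eq (X ++ v ++ Y) (c - X.length)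
    have hlegω : Legal S (wordAt ω (c - X.length) (X ++ v ++ Y).length) := by rwa [hω]
    refine ⟨ω, ?_, hlegω.of_infix (wordAt_infix_wordAt ω (by omega) (by simp; omega))⟩
    rw [List.length_append, List.length_append, wordAt_add, wordAt_add,
      sub_add_cancel] at hω
    exact (List.append_inj (List.append_inj hω (by simp)).1 (by simp)).2
  have hclosed : ∀ n, IsClosed (G n) := fun n =>
    (isClopen_setOf_wordAt_mem _ _ _).isClosed.inter (isClopen_setOf_wordAt_mem _ _ _).isClosed
  obtain ⟨ω, hω⟩ := IsCompact.nonempty_iInter_of_sequence_nonempty_isCompact_isClosed G hanti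
    hne (hclosed 0).isCompact hclosed
  rw [Set.mem_iInter] at hω
  refine ⟨ω, fun u ⟨_, hu⟩ => ?_, (hω 0).1⟩
  obtain ⟨k, hk⟩ := occurs_iff.mp hu
  set n := (max (c - k) (k + u.length - c - v.length)).toNat
  exact hk ▸ (hω n).2.of_infix (wordAt_infix_wordAt ω (by omega) (by push_cast; omega))

end Extension

section Dichotomy

variable {S : A → List A}

theorem half_le_hausDist_hull_omegaS {ω : ℤ → A} (hΩ : (OmegaS S).Nonempty) {u : List A}
    (hu₂ : u.length = 2) (hu : Occurs u ω) (hul : ¬Legal S u) :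
    1 / 2 ≤ hausDist (hull ω) (OmegaS S) := by
  obtain ⟨k, hk⟩ := occurs_iff.mp hu
  have hwindow : wordAt (shift (-k) ω) 0 2 = u := by
    rw [wordAt_shift, zero_sub, neg_neg, ← hu₂, ← hk]
  refine (le_distToSet hΩ fun ω' hω' => half_le_confDist_of_wordAt_ne fun h => hul ?_).trans
    (distToSet_le_hausDist (shift_mem_hull ω (-k)))
  rw [← hwindow, h]
  exact hω' _ ⟨List.ne_nil_of_length_pos (by simp), occurs_wordAt ω' 0 2⟩

theorem hausDist_hull_omegaS_le [Finite A] (hS : ∀ a, S a ≠ []) (hprim : Primitive S)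
    (hexp : ∃ a, 2 ≤ (S a).length) {ω : ℤ → A} {r : ℕ}
    (hlegal : ∀ v : List A, v.length = 2 * r + 1 → Occurs v ω → Legal S v)
    (hocc : ∀ v : List A, v.length = 2 * r + 1 → Legal S v → Occurs v ω) :
    hausDist (hull ω) (OmegaS S) ≤ 1 / (r + 1) := by
  refine hausDist_le (by positivity) (fun η hη => ?_) (fun ω' hω' => ?_)
  · obtain ⟨ω', hω', hwindow⟩ := (hlegal _ (length_wordAt _ _ _)
      (occurs_of_mem_hull hη (-r) (2 * r + 1))).exists_mem_omegaS hS hprim hexp (-r)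
    rw [length_wordAt] at hwindow
    exact (distToSet_le_of_mem hω').trans (confDist_le_of_wordAt_eq hwindow.symm)
  · obtain ⟨k, hk⟩ := occurs_iff.mp (hocc _ (length_wordAt _ _ _)
      (hω' _ ⟨List.ne_nil_of_length_pos (by simp), occurs_wordAt ω' (-r) (2 * r + 1)⟩))
    rw [length_wordAt] at hk
    refine (distToSet_le_of_mem (shift_mem_hull ω (-r - k))).trans (confDist_le_of_wordAt_eq ?_)
    rw [wordAt_shift, sub_sub_cancel, hk]

variable [Nonempty A]

theorem eventually_legal_of_occurs_iterate_confSub (hS : ∀ a, S a ≠ []) (hprim : Primitive S)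
    (hexp : ∃ a, 2 ≤ (S a).length) {ω₀ : ℤ → A} {N : ℕ}
    (hN : ∀ w : List A, w.length = 2 → Occurs w ((confSub S)^[N] ω₀) → Legal S w) (R : ℕ) :
    ∀ᶠ n in Filter.atTop, ∀ v : List A, v.length = R →
      Occurs v ((confSub S)^[n] ω₀) → Legal S v := by
  obtain ⟨m₀, hm₀⟩ := Filter.eventually_atTop.mp
    (eventually_le_length_iterate_wordSub hS hprim hexp R)
  refine Filter.eventually_atTop.mpr ⟨N + m₀, fun n hn v hv hvo => ?_⟩
  obtain ⟨m, rfl⟩ := Nat.exists_eq_add_of_le (le_trans (Nat.le_add_right N m₀) hn)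
  rw [add_comm, Function.iterate_add_apply] at hvo
  exact legal_of_occurs_iterate_confSub hS hN (fun a => by have := hm₀ m (by omega) a; omega) hvo

theorem Legal.eventually_occurs_iterate_confSub (hS : ∀ a, S a ≠ []) (hprim : Primitive S)
    {v : List A} (hv : Legal S v) (ω₀ : ℤ → A) :
    ∀ᶠ n in Filter.atTop, Occurs v ((confSub S)^[n] ω₀) := by
  obtain ⟨p, -, hp⟩ := hprim
  obtain ⟨a, m, hva⟩ := hv
  refine Filter.eventually_atTop.mpr ⟨m + p, fun n hn => ?_⟩
  obtain ⟨x, y, hxy⟩ := List.append_of_mem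
    (mem_iterate_wordSub_of_le hS hp (t := n - m) (by omega) (ω₀ 0) a)
  have ha : [a] <:+: (wordSub S)^[n - m] [ω₀ 0] := ⟨x, y, by simp [hxy]⟩
  have hinfix : (wordSub S)^[m] [a] <:+: (wordSub S)^[n] [ω₀ 0] := by
    have := ha.iterate_wordSub S m
    rwa [← Function.iterate_add_apply, Nat.add_sub_cancel' (by omega)] at this
  have hletter : Occurs [ω₀ 0] ω₀ := occurs_iff.mpr ⟨0, by simp⟩
  exact (hletter.iterate_confSub hS n).of_infix (hva.trans hinfix)

theorem eventually_forall_legal_occurs_iterate_confSub [Finite A] (hS : ∀ a, S a ≠ [])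
    (hprim : Primitive S) (ω₀ : ℤ → A) (R : ℕ) :
    ∀ᶠ n in Filter.atTop, ∀ v : List A, v.length = R → Legal S v →
      Occurs v ((confSub S)^[n] ω₀) := by
  have hfin : {v : List A | v.length = R ∧ Legal S v}.Finite :=
    (List.finite_length_eq A R).subset fun _ hv => hv.1
  filter_upwards [(Filter.eventually_all_finite hfin).mpr fun v hv =>
    hv.2.eventually_occurs_iterate_confSub hS hprim ω₀] with n hn v hvR hv
  exact hn v ⟨hvR, hv⟩

theorem tendsto_hausDist_IHS_omegaS [Finite A] (hS : ∀ a, S a ≠ []) (hprim : Primitive S)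
    (hexp : ∃ a, 2 ≤ (S a).length) {ω₀ : ℤ → A} {N : ℕ}
    (hN : ∀ w : List A, w.length = 2 → Occurs w ((confSub S)^[N] ω₀) → Legal S w) :
    Filter.Tendsto (fun n => hausDist (IHS S ω₀ n) (OmegaS S)) Filter.atTop (nhds 0) := by
  refine tendsto_order.2 ⟨fun a ha => Filter.Eventually.of_forall fun n =>
    ha.trans_le (hausDist_nonneg ⟨_, shift_mem_hull _ 0⟩), fun ε hε => ?_⟩
  obtain ⟨r, hr⟩ := exists_nat_one_div_lt hε
  filter_upwards [eventually_legal_of_occurs_iterate_confSub hS hprim hexp hN (2 * r + 1),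
    eventually_forall_legal_occurs_iterate_confSub hS hprim ω₀ (2 * r + 1)] with n hlegal hocc
  exact (hausDist_hull_omegaS_le hS hprim hexp hlegal hocc).trans_lt hr

end Dichotomy

theorem not_exists_pos_forall_le_of_tendsto_zero {ι : Type*} {l : Filter ι} [l.NeBot]
    {f : ι → ℝ} (hf : Filter.Tendsto f l (nhds 0)) : ¬∃ ε : ℝ, 0 < ε ∧ ∀ i, ε ≤ f i :=
  fun ⟨ε, hε, hle⟩ =>
    let ⟨i, hi⟩ := (hf.eventually (gt_mem_nhds hε)).exists
    (hle i).not_gt hi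

/-- dichotomy: either the iterated hulls converge to `Ω(S)`, or their
distance to `Ω(S)` is bounded away from `0` (exactly one of the two holds). -/
theorem stmt16 {A : Type*} [Fintype A] [Nonempty A] (S : A → List A) (hS : ∀ a, S a ≠ [])
    (hprim : Primitive S) (hexp : ∃ a, 2 ≤ (S a).length) (ω₀ : ℤ → A) :
    Xor' (Filter.Tendsto (fun n : ℕ => hausDist (IHS S ω₀ n) (OmegaS S))
        Filter.atTop (nhds 0))
      (∃ ε : ℝ, 0 < ε ∧ ∀ n : ℕ, ε ≤ hausDist (IHS S ω₀ n) (OmegaS S)) := by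
  by_cases hbad : ∀ n, ∃ u : List A, u.length = 2 ∧ Occurs u ((confSub S)^[n] ω₀) ∧ ¬Legal S u
  · obtain ⟨ω, hω, -⟩ :=
      (legal_singleton S (Classical.arbitrary A)).exists_mem_omegaS hS hprim hexp 0
    have hbdd : ∃ ε : ℝ, 0 < ε ∧ ∀ n : ℕ, ε ≤ hausDist (IHS S ω₀ n) (OmegaS S) :=
      ⟨1 / 2, by norm_num, fun n =>
        let ⟨_, hu₂, hu, hul⟩ := hbad n
        half_le_hausDist_hull_omegaS ⟨ω, hω⟩ hu₂ hu hul⟩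
    exact Or.inr ⟨hbdd, fun ht => not_exists_pos_forall_le_of_tendsto_zero ht hbdd⟩
  · push Not at hbad
    obtain ⟨N, hN⟩ := hbad
    have ht := tendsto_hausDist_IHS_omegaS hS hprim hexp hN
    exact Or.inl ⟨ht, not_exists_pos_forall_le_of_tendsto_zero ht⟩

end QC
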